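/- arXiv:2508.11264 — 2 statements merged into one kernel-verified Lean document; each statement's English description precedes it below -/
import Mathlib

section
/- Let α be irrational and φ : ℝ → ℝ a differentiable function such that for all n, m ∈ ℤ and all x ∈ ℝ there exist n', m' ∈ ℤ (depending on n, m but not on x) with φ(x + n + mα) = φ(x) + n' + m'β, where β is a fixed irrational. If φ' is continuous, then φ' is constant; hence φ is affine, φ(x) = λx + μ. -/
/-- If `φ : ℝ → ℝ` is differentiable with continuous derivative and satisfies
`φ(x + n + mα) = φ(x) + c(n,m)` with `c(n,m) ∈ ℤ + βℤ`, `α, β` irrational, then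
`deriv φ` is constant, hence `φ` is affine. -/
theorem affine_of_quasi_periodicity (α β : ℝ) (hα : Irrational α) (hβ : Irrational β)
    (φ : ℝ → ℝ) (hφ : Differentiable ℝ φ) (hφ' : Continuous (deriv φ))
    (c : ℤ × ℤ → ℝ) (hc : ∀ n m : ℤ, ∃ n' m' : ℤ, c (n, m) = (n' : ℝ) + (m' : ℝ) * β)
    (heq : ∀ (n m : ℤ) (x : ℝ), φ (x + (n : ℝ) + (m : ℝ) * α) = φ x + c (n, m)) :
    (∃ l : ℝ, ∀ x, deriv φ x = l) ∧ (∃ l μ : ℝ, ∀ x, φ x = l * x + μ) := by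
  -- deriv φ has every n + mα as a period
  have key : ∀ n m : ℤ, ∀ x : ℝ, deriv φ (x + ((n : ℝ) + (m : ℝ) * α)) = deriv φ x := by
    intro n m x
    have h1 : (fun y => φ (y + ((n : ℝ) + (m : ℝ) * α))) = fun y => φ y + c (n, m) := by
      funext y
      rw [show y + ((n : ℝ) + (m : ℝ) * α) = y + (n : ℝ) + (m : ℝ) * α by ring, heq n m y]
    have h2 := deriv_comp_add_const φ ((n : ℝ) + (m : ℝ) * α) x
    rw [h1, deriv_add_const] at h2
    exact h2.symm
  -- the subgroup generated by 1 and α consists of periods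
  set S : AddSubgroup ℝ := AddSubgroup.closure {1, α} with hS
  have hper : ∀ s ∈ S, ∀ x : ℝ, deriv φ (x + s) = deriv φ x := by
    intro s hs
    refine AddSubgroup.closure_induction ?_ ?_ ?_ ?_ hs
    · rintro g (rfl | rfl)
      · intro x; simpa using key 1 0 x
      · intro x; simpa using key 0 1 x
    · intro x; simp
    · intro a b _ _ ha hb x
      rw [← add_assoc, hb, ha]
    · intro a _ ha x
      have := ha (x + -a)
      simpa using this.symm
  -- S is dense
  have hdense : Dense (S : Set ℝ) := by
    rcases S.dense_or_cyclic with h | ⟨a, ha⟩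
    · exact h
    · exfalso
      have h1 : (1 : ℝ) ∈ S := AddSubgroup.subset_closure (by simp)
      have h2 : α ∈ S := AddSubgroup.subset_closure (by simp)
      rw [ha, AddSubgroup.mem_closure_singleton] at h1 h2
      obtain ⟨n, hn⟩ := h1
      obtain ⟨m, hm⟩ := h2
      have hn0 : (n : ℝ) ≠ 0 := by
        intro h
        rw [zsmul_eq_mul, h, zero_mul] at hn
        exact one_ne_zero hn.symm
      apply hα
      refine ⟨(m : ℚ) / (n : ℚ), ?_⟩
      rw [zsmul_eq_mul] at hn hm
      push_cast
      rw [div_eq_iff hn0, ← hm, mul_assoc, mul_comm a (n:ℝ), hn, mul_one]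
  -- deriv φ is constant
  have hconst : ∀ x : ℝ, deriv φ x = deriv φ 0 := by
    intro x
    have hcl : IsClosed {y : ℝ | deriv φ y = deriv φ 0} :=
      isClosed_eq hφ' continuous_const
    have hsub : (S : Set ℝ) ⊆ {y : ℝ | deriv φ y = deriv φ 0} := by
      intro s hs
      simpa using hper s hs 0
    have : closure (S : Set ℝ) ⊆ {y : ℝ | deriv φ y = deriv φ 0} :=
      hcl.closure_subset_iff.mpr hsub
    rw [hdense.closure_eq] at this
    exact this (Set.mem_univ x)
  refine ⟨⟨deriv φ 0, hconst⟩, ⟨deriv φ 0, φ 0, ?_⟩⟩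
  intro x
  set l := deriv φ 0 with hl
  have hψ : Differentiable ℝ (fun x => φ x - l * x) := by
    exact hφ.sub (differentiable_const l |>.mul differentiable_id)
  have hψ' : ∀ x, deriv (fun x => φ x - l * x) x = 0 := by
    intro x
    have h1 : HasDerivAt (fun x => φ x - l * x) (deriv φ x - l * 1) x :=
      (hφ x).hasDerivAt.sub ((hasDerivAt_id x).const_mul l)
    rw [h1.deriv, hconst x, mul_one, sub_self]
  have := is_const_of_deriv_eq_zero hψ hψ' x 0
  simp at this
  linarith [this]
end

section
/- Let α be irrational. If λ ∈ ℝ satisfies λ·(ℤ + αℤ) ⊆ ℤ + αℤ and λ ∉ ℚ, then α is a quadratic irrational, i.e., satisfies a quadratic equation with integer coefficients. -/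
/-! Write `λ = λ·1 = p + qα` and `λα = r + sα`. Substituting the first into the second gives
`qα² + (p - s)α - r = 0`, and `q ≠ 0` because `λ` is irrational. -/

theorem AddSubgroup.mem_closure_one_pair {R : Type*} [Ring R] {a x : R} :
    x ∈ closure ({1, a} : Set R) ↔ ∃ m n : ℤ, (m : R) + n * a = x := by
  simp only [mem_closure_pair, zsmul_eq_mul, mul_one]

theorem quadratic_of_irrational_multiplier_general (α l : ℝ) (hl : Irrational l)
    (h : (fun x => l * x) '' ((AddSubgroup.closure ({1, α} : Set ℝ) : AddSubgroup ℝ) : Set ℝ)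
        ⊆ ((AddSubgroup.closure ({1, α} : Set ℝ) : AddSubgroup ℝ) : Set ℝ)) :
    ∃ a b c : ℤ, a ≠ 0 ∧ (a : ℝ) * α ^ 2 + (b : ℝ) * α + (c : ℝ) = 0 := by
  have mul_mem {x : ℝ} (hx : x ∈ ({1, α} : Set ℝ)) :
      ∃ m n : ℤ, (m : ℝ) + n * α = l * x :=
    AddSubgroup.mem_closure_one_pair.mp (h ⟨x, AddSubgroup.subset_closure hx, rfl⟩)
  obtain ⟨p, q, hpq⟩ := mul_mem (x := 1) (by simp)
  obtain ⟨r, s, hrs⟩ := mul_mem (x := α) (by simp)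
  have hq : q ≠ 0 := by
    rintro rfl
    exact hl ⟨p, by simpa using hpq⟩
  refine ⟨q, p - s, -r, hq, ?_⟩
  rw [mul_one] at hpq
  push_cast
  linear_combination α * hpq - hrs

/-- If `λ·(ℤ + αℤ) ⊆ ℤ + αℤ` with `λ` irrational, then `α` is a quadratic irrational. -/
theorem quadratic_of_irrational_multiplier (α l : ℝ) (hα : Irrational α) (hl : Irrational l)
    (h : (fun x => l * x) '' ((AddSubgroup.closure ({1, α} : Set ℝ) : AddSubgroup ℝ) : Set ℝ)
        ⊆ ((AddSubgroup.closure ({1, α} : Set ℝ) : AddSubgroup ℝ) : Set ℝ)) :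
    ∃ a b c : ℤ, a ≠ 0 ∧ (a : ℝ) * α ^ 2 + (b : ℝ) * α + (c : ℝ) = 0 :=
  quadratic_of_irrational_multiplier_general α l hl h
end
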